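/- Fix n ≥ 1 and d ≥ 1. Suppose that every ideal J ⊆ ℂ[T_0, …, T_n] generated by finitely many homogeneous polynomials of degree ≤ d satisfies (√J)^{d^n} ⊆ J. Then for all polynomials f_1, …, f_m ∈ ℂ[t_1, …, t_n] of total degree ≤ d having no common zero in ℂ^n, there exist g_1, …, g_m ∈ ℂ[t_1, …, t_n] with Σ_j g_j f_j = 1 and deg(g_j f_j) ≤ d^n for every j. -/

import Mathlib

/-!
Homogenize each `f_j` to degree `d` with respect to a new variable `T₀`. A common projective zero
of the homogenizations with `T₀ ≠ 0` would dehomogenize to a common zero of the `f_j` in `ℂⁿ`, so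
`T₀` vanishes on their zero locus and lies in the radical of the ideal they generate by the
Nullstellensatz. The hypothesis then gives `T₀^(dⁿ) = ∑ c_j F_j`; keeping only the homogeneous part
of degree `dⁿ` makes each `c_j` homogeneous of degree `dⁿ - d`, and setting `T₀ = 1` yields
`1 = ∑ g_j f_j` with `deg (g_j f_j) ≤ dⁿ`.
-/

open MvPolynomial

namespace Finsupp

theorem degree_cons {n : ℕ} {M : Type*} [AddCommMonoid M] (a : M) (s : Fin n →₀ M) :
    (cons a s).degree = a + s.degree := by
  simp only [degree_eq_sum, Fin.sum_univ_succ, cons_zero, cons_succ]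

theorem degree_tail_le {n : ℕ} (s : Fin (n + 1) →₀ ℕ) : (tail s).degree ≤ s.degree := by
  conv_rhs => rw [← cons_tail s, degree_cons]
  exact Nat.le_add_left _ _

end Finsupp

namespace MvPolynomial

section Homogeneous

variable {σ R : Type*} [CommSemiring R]

theorem degree_le_totalDegree {p : MvPolynomial σ R} {s : σ →₀ ℕ} (h : s ∈ p.support) :
    s.degree ≤ p.totalDegree :=
  le_totalDegree h

theorem homogeneousComponent_mul_of_isHomogeneous {e D : ℕ} {F : MvPolynomial σ R}
    (hF : F.IsHomogeneous e) (heD : e ≤ D) (c : MvPolynomial σ R) :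
    homogeneousComponent D (c * F) = homogeneousComponent (D - e) c * F := by
  induction c using MvPolynomial.induction_on' with
  | monomial s a =>
    rw [homogeneousComponent_of_mem ((isHomogeneous_monomial a rfl).mul hF),
      homogeneousComponent_of_mem (isHomogeneous_monomial a rfl)]
    split_ifs <;> first | rfl | (exfalso; omega)
  | add p q hp hq => rw [add_mul, map_add, hp, hq, map_add, add_mul]

theorem exists_isHomogeneous_coeffs_of_mem_span {ι : Type*} [Fintype ι]
    {F : ι → MvPolynomial σ R} {e : ι → ℕ} {D : ℕ} (hF : ∀ j, (F j).IsHomogeneous (e j))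
    (he : ∀ j, e j ≤ D) {p : MvPolynomial σ R} (hp : p.IsHomogeneous D)
    (hmem : p ∈ Ideal.span (Set.range F)) :
    ∃ c : ι → MvPolynomial σ R, (∀ j, (c j).IsHomogeneous (D - e j)) ∧ ∑ j, c j * F j = p := by
  obtain ⟨c, hc⟩ := Ideal.mem_span_range_iff_exists_fun.mp hmem
  refine ⟨fun j => homogeneousComponent (D - e j) (c j),
    fun j => homogeneousComponent_isHomogeneous _ _, ?_⟩
  calc ∑ j, homogeneousComponent (D - e j) (c j) * F j
      = homogeneousComponent D (∑ j, c j * F j) := by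
        simp only [map_sum, homogeneousComponent_mul_of_isHomogeneous (hF _) (he _)]
    _ = p := by rw [hc, homogeneousComponent_eq_self hp]

end Homogeneous

section Homogenize

variable {R : Type*} [CommSemiring R] {n : ℕ}

/-- The new variable is `X 0`. Because of truncated subtraction the result is homogeneous
only when `f.totalDegree ≤ d`. -/
noncomputable def homogenize (d : ℕ) (f : MvPolynomial (Fin n) R) :
    MvPolynomial (Fin (n + 1)) R :=
  ∑ s ∈ f.support, monomial (Finsupp.cons (d - s.degree) s) (coeff s f)

noncomputable def dehomogenize : MvPolynomial (Fin (n + 1)) R →ₐ[R] MvPolynomial (Fin n) R :=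
  aeval (Fin.cons 1 X)

theorem isHomogeneous_homogenize {d : ℕ} {f : MvPolynomial (Fin n) R}
    (hf : f.totalDegree ≤ d) : (homogenize d f).IsHomogeneous d := by
  refine IsHomogeneous.sum _ _ _ fun s hs => isHomogeneous_monomial _ ?_
  have := (degree_le_totalDegree hs).trans hf
  rw [Finsupp.degree_cons]
  omega

theorem dehomogenize_monomial (s : Fin (n + 1) →₀ ℕ) (a : R) :
    dehomogenize (monomial s a) = monomial (Finsupp.tail s) a := by
  rw [dehomogenize, aeval_monomial, monomial_eq, Finsupp.prod_pow, Finsupp.prod_pow,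
    Fin.prod_univ_succ]
  simp [Finsupp.tail_apply, algebraMap_eq]

theorem dehomogenize_X_zero : dehomogenize (X 0 : MvPolynomial (Fin (n + 1)) R) = 1 :=
  aeval_X _ _

theorem dehomogenize_homogenize (d : ℕ) (f : MvPolynomial (Fin n) R) :
    dehomogenize (homogenize d f) = f := by
  simp only [homogenize, map_sum, dehomogenize_monomial, Finsupp.tail_cons]
  exact support_sum_monomial_coeff f

theorem totalDegree_dehomogenize_le (P : MvPolynomial (Fin (n + 1)) R) :
    (dehomogenize P).totalDegree ≤ P.totalDegree := by
  conv_lhs => rw [← support_sum_monomial_coeff P]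
  rw [map_sum]
  refine (totalDegree_finsetSum _ _).trans (Finset.sup_le fun s hs => ?_)
  rw [dehomogenize_monomial]
  calc (monomial (Finsupp.tail s) (coeff s P)).totalDegree
      ≤ (Finsupp.tail s).degree := totalDegree_monomial_le _ _
    _ ≤ s.degree := Finsupp.degree_tail_le s
    _ ≤ P.totalDegree := degree_le_totalDegree hs

theorem eval_homogenize {K : Type*} [Field K] {d : ℕ} {f : MvPolynomial (Fin n) K}
    (hf : f.totalDegree ≤ d) {x : Fin (n + 1) → K} (hx : x 0 ≠ 0) :
    eval x (homogenize d f) = x 0 ^ d * eval (fun i => x i.succ / x 0) f := by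
  rw [homogenize, map_sum, eval_eq' _ f, Finset.mul_sum]
  refine Finset.sum_congr rfl fun s hs => ?_
  rw [eval_monomial, Finsupp.prod_pow, Fin.prod_univ_succ, Finsupp.cons_zero]
  simp only [Finsupp.cons_succ, div_pow]
  rw [Finset.prod_div_distrib, Finset.prod_pow_eq_pow_sum, ← Finsupp.degree_eq_sum,
    pow_sub₀ _ hx ((degree_le_totalDegree hs).trans hf)]
  field_simp

theorem X_zero_mem_radical_span_homogenize {K : Type*} [Field K] [IsAlgClosed K] {ι : Type*}
    {d : ℕ} {f : ι → MvPolynomial (Fin n) K} (hf : ∀ j, (f j).totalDegree ≤ d)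
    (hz : ∀ z : Fin n → K, ∃ j, eval z (f j) ≠ 0) :
    X 0 ∈ (Ideal.span (Set.range fun j => homogenize d (f j))).radical := by
  rw [← vanishingIdeal_zeroLocus_eq_radical (K := K), mem_vanishingIdeal_iff]
  intro x hx
  rw [aeval_X]
  by_contra hx0
  obtain ⟨j, hj⟩ := hz fun i => x i.succ / x 0
  have hFj : eval x (homogenize d (f j)) = 0 :=
    (mem_zeroLocus_iff.mp hx) _ (Ideal.subset_span ⟨j, rfl⟩)
  rw [eval_homogenize (hf j) hx0] at hFj
  exact hj ((mul_eq_zero.mp hFj).resolve_left (pow_ne_zero _ hx0))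

end Homogenize

end MvPolynomial

theorem kollar_K2_implies_K1_general
    (n d : ℕ) (hn : 1 ≤ n)
    (hK2 : ∀ (m : ℕ) (F : Fin m → MvPolynomial (Fin (n + 1)) ℂ),
      (∀ j, ∃ e ≤ d, (F j).IsHomogeneous e) →
      (Ideal.span (Set.range F)).radical ^ (d ^ n) ≤ Ideal.span (Set.range F)) :
    ∀ (m : ℕ) (f : Fin m → MvPolynomial (Fin n) ℂ),
      (∀ j, (f j).totalDegree ≤ d) →
      (∀ z : Fin n → ℂ, ∃ j, eval z (f j) ≠ 0) →
      ∃ g : Fin m → MvPolynomial (Fin n) ℂ,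
        (∑ j, g j * f j) = 1 ∧
        ∀ j, (g j * f j).totalDegree ≤ d ^ n := by
  intro m f hdeg hz
  have hF (j : Fin m) : (homogenize d (f j)).IsHomogeneous d := isHomogeneous_homogenize (hdeg j)
  have hdD : d ≤ d ^ n := Nat.le_self_pow (by omega) d
  have hpow : (X 0 : MvPolynomial (Fin (n + 1)) ℂ) ^ d ^ n ∈
      Ideal.span (Set.range fun j => homogenize d (f j)) :=
    hK2 m _ (fun j => ⟨d, le_rfl, hF j⟩)
      (Ideal.pow_mem_pow (X_zero_mem_radical_span_homogenize hdeg hz) _)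
  obtain ⟨c, hc_hom, hc⟩ :=
    exists_isHomogeneous_coeffs_of_mem_span hF (fun _ => hdD) (isHomogeneous_X_pow _ _) hpow
  refine ⟨fun j => dehomogenize (c j), ?_, fun j => ?_⟩
  · simpa only [map_sum, map_mul, map_pow, dehomogenize_homogenize, dehomogenize_X_zero,
      one_pow] using congrArg dehomogenize hc
  · calc (dehomogenize (c j) * f j).totalDegree
        ≤ (c j).totalDegree + d :=
          (totalDegree_mul _ _).trans (add_le_add (totalDegree_dehomogenize_le _) (hdeg j))
      _ ≤ (d ^ n - d) + d := by gcongr; exact (hc_hom j).totalDegree_le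
      _ = d ^ n := Nat.sub_add_cancel hdD

/-- **(K2) implies (K1): Kollár's projective statement yields the effective
Nullstellensatz bound.** If every ideal of `ℂ[T₀,…,T_n]` generated by finitely
many homogeneous polynomials of degree `≤ d` contains the `dⁿ`-th power of its
radical, then any `f₁,…,f_m ∈ ℂ[t₁,…,t_n]` of total degree `≤ d` without a
common zero in `ℂⁿ` admit `g_j` with `∑ g_j f_j = 1` and `deg(g_j f_j) ≤ dⁿ`. -/
theorem kollar_K2_implies_K1
    (n d : ℕ) (hn : 1 ≤ n) (hd : 1 ≤ d)
    (hK2 : ∀ (m : ℕ) (F : Fin m → MvPolynomial (Fin (n + 1)) ℂ),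
      (∀ j, ∃ e ≤ d, (F j).IsHomogeneous e) →
      (Ideal.span (Set.range F)).radical ^ (d ^ n) ≤ Ideal.span (Set.range F)) :
    ∀ (m : ℕ) (f : Fin m → MvPolynomial (Fin n) ℂ),
      (∀ j, (f j).totalDegree ≤ d) →
      (∀ z : Fin n → ℂ, ∃ j, eval z (f j) ≠ 0) →
      ∃ g : Fin m → MvPolynomial (Fin n) ℂ,
        (∑ j, g j * f j) = 1 ∧
        ∀ j, (g j * f j).totalDegree ≤ d ^ n :=
  kollar_K2_implies_K1_general n d hn hK2
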